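/- Let (M, E) be an exact category and 𝒫 a full additive subcategory of M satisfying condition (▼). Then for any conflation 0 → X →f Y →g Z → 0 in M which is Hom(𝒫,−)-exact, the morphism f̄ : X → Y is the kernel of ḡ : Y → Z in the quotient category M/𝒫. -/

import Mathlib

open CategoryTheory CategoryTheory.Limits

universe v u

namespace PaperQEC

section QuotientCategory

variable {C : Type u} [Category.{v} C] [Preadditive C]

/-- `f` factors through an object belonging to `P`. -/
def FactorsThru (P : Set C) {X Y : C} (f : X ⟶ Y) : Prop :=
  ∃ Z ∈ P, ∃ (g : X ⟶ Z) (h : Z ⟶ Y), g ≫ h = f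

/-- The subgroup of `Hom(X, Y)` generated by morphisms factoring through an object of `P`
(for `P` closed under finite sums this is just the set of such morphisms). -/
def factorIdeal (P : Set C) (X Y : C) : AddSubgroup (X ⟶ Y) :=
  AddSubgroup.closure {f | FactorsThru P f}

lemma factorIdeal_comp_left (P : Set C) {X Y Z : C} {f : X ⟶ Y}
    (hf : f ∈ factorIdeal P X Y) (g : Y ⟶ Z) : f ≫ g ∈ factorIdeal P X Z := by
  have h : factorIdeal P X Y ≤
      (factorIdeal P X Z).comap (AddMonoidHom.mk' (fun u : X ⟶ Y => u ≫ g)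
        (fun a b => Preadditive.add_comp _ _ _ _ _ _)) := by
    refine (AddSubgroup.closure_le _).mpr ?_
    rintro u ⟨Zp, hZp, a, b, rfl⟩
    exact AddSubgroup.mem_comap.mpr
      (AddSubgroup.subset_closure ⟨Zp, hZp, a, b ≫ g, (Category.assoc _ _ _).symm⟩)
  exact h hf

lemma factorIdeal_comp_right (P : Set C) {X Y Z : C} (f : X ⟶ Y) {g : Y ⟶ Z}
    (hg : g ∈ factorIdeal P Y Z) : f ≫ g ∈ factorIdeal P X Z := by
  have h : factorIdeal P Y Z ≤
      (factorIdeal P X Z).comap (AddMonoidHom.mk' (fun u : Y ⟶ Z => f ≫ u)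
        (fun a b => Preadditive.comp_add _ _ _ _ _ _)) := by
    refine (AddSubgroup.closure_le _).mpr ?_
    rintro u ⟨Zp, hZp, a, b, rfl⟩
    exact AddSubgroup.mem_comap.mpr
      (AddSubgroup.subset_closure ⟨Zp, hZp, f ≫ a, b, Category.assoc _ _ _⟩)
  exact h hg

/-- Objects of the quotient (stable) category `C / P`. -/
structure QuotObj (P : Set C) : Type u where
  obj : C

variable (P : Set C)

instance quotCategory : Category.{v} (QuotObj P) where
  Hom A B := (A.obj ⟶ B.obj) ⧸ factorIdeal P A.obj B.obj
  id A := QuotientAddGroup.mk (𝟙 A.obj)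
  comp {A B D} f g :=
    Quotient.liftOn₂ f g (fun a b => QuotientAddGroup.mk (a ≫ b)) (by
      intro a₁ b₁ a₂ b₂ ha hb
      have ha' : -a₁ + a₂ ∈ factorIdeal P A.obj B.obj := QuotientAddGroup.leftRel_apply.mp ha
      have hb' : -b₁ + b₂ ∈ factorIdeal P B.obj D.obj := QuotientAddGroup.leftRel_apply.mp hb
      refine (QuotientAddGroup.eq (s := factorIdeal P A.obj D.obj)).mpr ?_
      have h1 : (-a₁ + a₂) ≫ b₁ ∈ factorIdeal P A.obj D.obj :=
        factorIdeal_comp_left P ha' b₁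
      have h2 : a₂ ≫ (-b₁ + b₂) ∈ factorIdeal P A.obj D.obj :=
        factorIdeal_comp_right P a₂ hb'
      have h3 := AddSubgroup.add_mem _ h1 h2
      have heq : -(a₁ ≫ b₁) + a₂ ≫ b₂ = (-a₁ + a₂) ≫ b₁ + a₂ ≫ (-b₁ + b₂) := by
        simp only [Preadditive.add_comp, Preadditive.comp_add, Preadditive.neg_comp,
          Preadditive.comp_neg]
        abel
      rw [heq]; exact h3)
  id_comp {A B} f := by
    induction f using Quotient.inductionOn with
    | h a => exact congrArg QuotientAddGroup.mk (Category.id_comp a)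
  comp_id {A B} f := by
    induction f using Quotient.inductionOn with
    | h a => exact congrArg QuotientAddGroup.mk (Category.comp_id a)
  assoc {A B D E} f g h := by
    induction f using Quotient.inductionOn with
    | h a =>
    induction g using Quotient.inductionOn with
    | h b =>
    induction h using Quotient.inductionOn with
    | h c => exact congrArg QuotientAddGroup.mk (Category.assoc a b c)

/-- The image in the quotient category of a morphism of `C`. -/
def qmap {X Y : C} (f : X ⟶ Y) : (QuotObj.mk X : QuotObj P) ⟶ QuotObj.mk Y :=
  QuotientAddGroup.mk f

instance quotPreadditive : Preadditive (QuotObj P) where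
  homGroup A B :=
    inferInstanceAs (AddCommGroup ((A.obj ⟶ B.obj) ⧸ factorIdeal P A.obj B.obj))
  add_comp A B D f f' g := by
    induction f using Quotient.inductionOn with
    | h a =>
    induction f' using Quotient.inductionOn with
    | h a' =>
    induction g using Quotient.inductionOn with
    | h b =>
      show QuotientAddGroup.mk ((a + a') ≫ b) =
        QuotientAddGroup.mk (a ≫ b) + QuotientAddGroup.mk (a' ≫ b)
      rw [Preadditive.add_comp]
      rfl
  comp_add A B D f g g' := by
    induction f using Quotient.inductionOn with
    | h a =>
    induction g using Quotient.inductionOn with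
    | h b =>
    induction g' using Quotient.inductionOn with
    | h b' =>
      show QuotientAddGroup.mk (a ≫ (b + b')) =
        QuotientAddGroup.mk (a ≫ b) + QuotientAddGroup.mk (a ≫ b')
      rw [Preadditive.comp_add]
      rfl

end QuotientCategory

section Exact

variable {C : Type u} [Category.{v} C] [Preadditive C]

/-- `k` is a kernel of `f`. -/
def IsKernelOf {K X Y : C} (k : K ⟶ X) (f : X ⟶ Y) : Prop :=
  k ≫ f = 0 ∧ ∀ {T : C} (g : T ⟶ X), g ≫ f = 0 → ∃! t : T ⟶ K, t ≫ k = g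

/-- `c` is a cokernel of `f`. -/
def IsCokernelOf {X Y Q : C} (c : Y ⟶ Q) (f : X ⟶ Y) : Prop :=
  f ≫ c = 0 ∧ ∀ {T : C} (g : Y ⟶ T), f ≫ g = 0 → ∃! t : Q ⟶ T, c ≫ t = g

/-- A class of composable pairs of morphisms (the prospective conflations). -/
abbrev ConfClass (D : Type*) [Category D] :=
  ∀ ⦃X Y Z : D⦄, (X ⟶ Y) → (Y ⟶ Z) → Prop

/-- A Quillen exact structure on an additive category: a class of kernel–cokernel pairs
(conflations), closed under isomorphisms, containing the identities as inflations and
deflations, with inflations and deflations closed under composition, pushouts of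
inflations and pullbacks of deflations existing and being inflations resp. deflations. -/
structure ExactStructure (D : Type u) [Category.{v} D] [Preadditive D] where
  conf : ConfClass D
  ker_of_conf : ∀ {X Y Z : D} {i : X ⟶ Y} {d : Y ⟶ Z}, conf i d → IsKernelOf i d
  coker_of_conf : ∀ {X Y Z : D} {i : X ⟶ Y} {d : Y ⟶ Z}, conf i d → IsCokernelOf d i
  isoClosed : ∀ {X Y Z X' Y' Z' : D} {i : X ⟶ Y} {d : Y ⟶ Z} {i' : X' ⟶ Y'} {d' : Y' ⟶ Z'}
    (eX : X ≅ X') (eY : Y ≅ Y') (eZ : Z ≅ Z'),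
    i ≫ eY.hom = eX.hom ≫ i' → d ≫ eZ.hom = eY.hom ≫ d' → conf i d → conf i' d'
  id_isInflation : ∀ X : D, ∃ (Z : D) (d : X ⟶ Z), conf (𝟙 X) d
  id_isDeflation : ∀ X : D, ∃ (W : D) (i : W ⟶ X), conf i (𝟙 X)
  infl_comp : ∀ {X Y Z : D} (i : X ⟶ Y) (j : Y ⟶ Z),
    (∃ (W : D) (d : Y ⟶ W), conf i d) → (∃ (W : D) (d : Z ⟶ W), conf j d) →
    ∃ (W : D) (d : Z ⟶ W), conf (i ≫ j) d
  defl_comp : ∀ {X Y Z : D} (p : X ⟶ Y) (q : Y ⟶ Z),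
    (∃ (W : D) (i : W ⟶ X), conf i p) → (∃ (W : D) (i : W ⟶ Y), conf i q) →
    ∃ (W : D) (i : W ⟶ X), conf i (p ≫ q)
  infl_pushout : ∀ {X Y : D} (i : X ⟶ Y), (∃ (W : D) (d : Y ⟶ W), conf i d) →
    ∀ {A : D} (f : X ⟶ A), ∃ (B : D) (i' : A ⟶ B) (g : Y ⟶ B),
      (∃ (W : D) (d : B ⟶ W), conf i' d) ∧ IsPushout i f g i'
  defl_pullback : ∀ {Y Z : D} (p : Y ⟶ Z), (∃ (W : D) (i : W ⟶ Y), conf i p) →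
    ∀ {B : D} (f : B ⟶ Z), ∃ (A : D) (p' : A ⟶ B) (g : A ⟶ Y),
      (∃ (W : D) (i : W ⟶ A), conf i p') ∧ IsPullback g p' p f

/-- `i` is an inflation, i.e. the first map of some conflation. -/
def IsInflation (E : ConfClass C) {X Y : C} (i : X ⟶ Y) : Prop :=
  ∃ (Z : C) (d : Y ⟶ Z), E i d

/-- `d` is a deflation, i.e. the second map of some conflation. -/
def IsDeflation (E : ConfClass C) {Y Z : C} (d : Y ⟶ Z) : Prop :=
  ∃ (X : C) (i : X ⟶ Y), E i d

/-- `P` is a full additive subcategory: nonempty, closed under isomorphisms,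
finite sums and summands. -/
structure IsAddSubcat [HasBinaryBiproducts C] (P : Set C) : Prop where
  nonempty : P.Nonempty
  isoClosed : ∀ {X Y : C}, (X ≅ Y) → X ∈ P → Y ∈ P
  sumClosed : ∀ {X Y : C}, X ∈ P → Y ∈ P → (X ⊞ Y) ∈ P
  summandClosed : ∀ {X Y : C} (s : X ⟶ Y) (r : Y ⟶ X), s ≫ r = 𝟙 X → Y ∈ P → X ∈ P

/-- `f : Q ⟶ X` is a `P`-precover of `X`. -/
def IsPrecover (P : Set C) {Q X : C} (f : Q ⟶ X) : Prop :=
  Q ∈ P ∧ ∀ (Q' : C), Q' ∈ P → ∀ g : Q' ⟶ X, ∃ h : Q' ⟶ Q, h ≫ f = g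

/-- `f : X ⟶ Q` is a `P`-preenvelope of `X`. -/
def IsPreenvelope (P : Set C) {X Q : C} (f : X ⟶ Q) : Prop :=
  Q ∈ P ∧ ∀ (Q' : C), Q' ∈ P → ∀ g : X ⟶ Q', ∃ h : Q ⟶ Q', f ≫ h = g

/-- `P` is strongly contravariantly finite: every object has a `P`-precover
which is a deflation. -/
def StronglyContraFinite (E : ConfClass C) (P : Set C) : Prop :=
  ∀ X : C, ∃ (Q : C) (f : Q ⟶ X), IsPrecover P f ∧ IsDeflation E f

/-- `P` is strongly covariantly finite: every object has a `P`-preenvelope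
which is an inflation. -/
def StronglyCovFinite (E : ConfClass C) (P : Set C) : Prop :=
  ∀ X : C, ∃ (Q : C) (f : X ⟶ Q), IsPreenvelope P f ∧ IsInflation E f

/-- The pair `(i, d)` is `Hom(P,-)`-exact: for every `Q ∈ P`, the sequence
`0 → Hom(Q,X) → Hom(Q,Y) → Hom(Q,Z) → 0` is exact. -/
def HomCovExact (P : Set C) {X Y Z : C} (i : X ⟶ Y) (d : Y ⟶ Z) : Prop :=
  ∀ Q : C, Q ∈ P →
    (∀ g : Q ⟶ X, g ≫ i = 0 → g = 0) ∧
    (∀ u : Q ⟶ Y, u ≫ d = 0 → ∃ g : Q ⟶ X, g ≫ i = u) ∧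
    (∀ h : Q ⟶ Z, ∃ u : Q ⟶ Y, u ≫ d = h)

/-- The pair `(i, d)` is `Hom(-,P)`-exact: for every `Q ∈ P`, the sequence
`0 → Hom(Z,Q) → Hom(Y,Q) → Hom(X,Q) → 0` is exact. -/
def HomContraExact (P : Set C) {X Y Z : C} (i : X ⟶ Y) (d : Y ⟶ Z) : Prop :=
  ∀ Q : C, Q ∈ P →
    (∀ g : Z ⟶ Q, d ≫ g = 0 → g = 0) ∧
    (∀ u : Y ⟶ Q, i ≫ u = 0 → ∃ g : Z ⟶ Q, d ≫ g = u) ∧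
    (∀ h : X ⟶ Q, ∃ u : Y ⟶ Q, i ≫ u = h)

/-- Condition (▲): `P` is strongly covariantly finite and every `X` admits a conflation
`0 → X → Q₀ → Q₁ → 0` with `Q₀, Q₁ ∈ P` whose inflation is a `P`-preenvelope. -/
def CondEnv (E : ConfClass C) (P : Set C) : Prop :=
  StronglyCovFinite E P ∧
  ∀ X : C, ∃ (Q₀ Q₁ : C) (α : X ⟶ Q₀) (q : Q₀ ⟶ Q₁),
    E α q ∧ Q₀ ∈ P ∧ Q₁ ∈ P ∧ IsPreenvelope P α

/-- Condition (▼): `P` is strongly contravariantly finite and every `X` admits a conflation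
`0 → P₁ → P₀ → X → 0` with `P₀, P₁ ∈ P` whose deflation is a `P`-precover. -/
def CondCov (E : ConfClass C) (P : Set C) : Prop :=
  StronglyContraFinite E P ∧
  ∀ X : C, ∃ (P₀ P₁ : C) (i : P₁ ⟶ P₀) (β : P₀ ⟶ X),
    E i β ∧ P₀ ∈ P ∧ P₁ ∈ P ∧ IsPrecover P β

/-- `P` is a pseudo-cluster tilting subcategory. -/
def PseudoClusterTilting (E : ConfClass C) (P : Set C) : Prop :=
  CondEnv E P ∧ CondCov E P

/-- The conflation `(i, d)` splits. -/
def Splits {X Y Z : C} (i : X ⟶ Y) (d : Y ⟶ Z) : Prop :=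
  (∃ r : Y ⟶ X, i ≫ r = 𝟙 X) ∧ ∃ s : Z ⟶ Y, s ≫ d = 𝟙 Z

/-- `P` is self-orthogonal with respect to the class `cl` of conflations: every
conflation in `cl` with both end terms in `P` splits. -/
def SelfOrthWrt (P : Set C) (cl : ConfClass C) : Prop :=
  ∀ ⦃X Y Z : C⦄ (i : X ⟶ Y) (d : Y ⟶ Z), cl i d → X ∈ P → Z ∈ P → Splits i d

/-- `P` is a cluster tilting subcategory: a pseudo-cluster tilting subcategory which is
self-orthogonal with respect to all conflations. -/
def ClusterTilting (E : ConfClass C) (P : Set C) : Prop :=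
  PseudoClusterTilting E P ∧ SelfOrthWrt P E

/-- The class `𝒮` of conflations. -/
def memS (E : ConfClass C) (P : Set C) ⦃S₁ S₂ S₃ : C⦄ (i : S₁ ⟶ S₂) (d : S₂ ⟶ S₃) : Prop :=
  E i d ∧ ∃ (U M₁ M₂ : C) (u₁ : U ⟶ S₁) (p₁ : S₁ ⟶ M₁) (u₂ : U ⟶ S₂) (p₂ : S₂ ⟶ M₂)
    (m : M₁ ⟶ M₂) (q : M₂ ⟶ S₃),
    E u₁ p₁ ∧ E u₂ p₂ ∧ E m q ∧
    HomCovExact P u₂ p₂ ∧ HomContraExact P m q ∧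
    u₁ ≫ i = u₂ ∧ i ≫ p₂ = p₁ ≫ m ∧ d = p₂ ≫ q

/-- The class `𝒯` of conflations. -/
def memT (E : ConfClass C) (P : Set C) ⦃T₁ T₂ T₃ : C⦄ (i : T₁ ⟶ T₂) (d : T₂ ⟶ T₃) : Prop :=
  E i d ∧ ∃ (V N₂ N₃ : C) (n₁ : T₁ ⟶ N₂) (n₂ : N₂ ⟶ N₃) (j₂ : N₂ ⟶ T₂) (v₂ : T₂ ⟶ V)
    (j₃ : N₃ ⟶ T₃) (v₃ : T₃ ⟶ V),
    E n₁ n₂ ∧ E j₂ v₂ ∧ E j₃ v₃ ∧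
    HomCovExact P n₁ n₂ ∧ HomContraExact P j₂ v₂ ∧
    i = n₁ ≫ j₂ ∧ n₂ ≫ j₃ = j₂ ≫ d ∧ d ≫ v₃ = v₂

end Exact

section AbelianDefs

/-- A preadditive category is abelian (in the sense of Definition 2.1 of the paper) if it
has kernels and cokernels and the canonical morphism from the coimage to the image of any
morphism is an isomorphism. -/
def IsAbelianCat (D : Type*) [Category D] [Preadditive D] : Prop :=
  ∃ (hk : HasKernels D) (hc : HasCokernels D),
    ∀ {X Y : D} (f : X ⟶ Y),
      IsIso (@CategoryTheory.Abelian.coimageImageComparison D _ _ X Y f _ _ _ _)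

/-- A preadditive category is semi-abelian if it has kernels and cokernels and the
canonical morphism from the coimage to the image of any morphism is both an epimorphism
and a monomorphism. -/
def IsSemiAbelianCat (D : Type*) [Category D] [Preadditive D] : Prop :=
  ∃ (hk : HasKernels D) (hc : HasCokernels D),
    ∀ {X Y : D} (f : X ⟶ Y),
      Mono (@CategoryTheory.Abelian.coimageImageComparison D _ _ X Y f _ _ _ _) ∧
      Epi (@CategoryTheory.Abelian.coimageImageComparison D _ _ X Y f _ _ _ _)

end AbelianDefs

section ConflationCategory

variable {M : Type u} [Category.{v} M] [Preadditive M]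

/-- Objects of the category `E(M)` of conflations: conflations `0 → X₁ → X₂ → X₃ → 0`
of the exact category `(M, E)`. -/
structure ConfObj (E : ExactStructure M) : Type max u v where
  X₁ : M
  X₂ : M
  X₃ : M
  i : X₁ ⟶ X₂
  d : X₂ ⟶ X₃
  conf : E.conf i d

variable {E : ExactStructure M}

/-- The additive group of morphisms of conflations: triples of morphisms making the two
squares commute. -/
def confHomGroup (A B : ConfObj E) :
    AddSubgroup ((A.X₁ ⟶ B.X₁) × (A.X₂ ⟶ B.X₂) × (A.X₃ ⟶ B.X₃)) where
  carrier := {t | A.i ≫ t.2.1 = t.1 ≫ B.i ∧ A.d ≫ t.2.2 = t.2.1 ≫ B.d}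
  zero_mem' := by simp
  add_mem' := by
    rintro a b ⟨ha₁, ha₂⟩ ⟨hb₁, hb₂⟩
    refine ⟨?_, ?_⟩ <;>
      simp [Preadditive.comp_add, Preadditive.add_comp, ha₁, ha₂, hb₁, hb₂]
  neg_mem' := by
    rintro a ⟨h₁, h₂⟩
    refine ⟨?_, ?_⟩ <;> simp [h₁, h₂]

instance confCategoryStruct : CategoryStruct.{v} (ConfObj E) where
  Hom A B := ↥(confHomGroup A B)
  id A := ⟨(𝟙 _, 𝟙 _, 𝟙 _), by constructor <;> simp⟩
  comp {A B D} f g := ⟨(f.1.1 ≫ g.1.1, f.1.2.1 ≫ g.1.2.1, f.1.2.2 ≫ g.1.2.2), by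
    obtain ⟨hf₁, hf₂⟩ := f.2
    obtain ⟨hg₁, hg₂⟩ := g.2
    constructor
    · rw [← Category.assoc, hf₁, Category.assoc, hg₁, ← Category.assoc]
    · rw [← Category.assoc, hf₂, Category.assoc, hg₂, ← Category.assoc]⟩

/-- Degree `-1` component of a morphism of conflations. -/
def homC₁ {A B : ConfObj E} (f : A ⟶ B) : A.X₁ ⟶ B.X₁ := f.1.1

/-- Degree `0` component of a morphism of conflations. -/
def homC₂ {A B : ConfObj E} (f : A ⟶ B) : A.X₂ ⟶ B.X₂ := f.1.2.1

/-- Degree `1` component of a morphism of conflations. -/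
def homC₃ {A B : ConfObj E} (f : A ⟶ B) : A.X₃ ⟶ B.X₃ := f.1.2.2

lemma confHom_ext {A B : ConfObj E} {f g : A ⟶ B} (h₁ : homC₁ f = homC₁ g)
    (h₂ : homC₂ f = homC₂ g) (h₃ : homC₃ f = homC₃ g) : f = g := by
  apply Subtype.ext
  show (homC₁ f, homC₂ f, homC₃ f) = (homC₁ g, homC₂ g, homC₃ g)
  rw [h₁, h₂, h₃]

@[simp] lemma homC₁_id (A : ConfObj E) : homC₁ (𝟙 A) = 𝟙 A.X₁ := rfl
@[simp] lemma homC₂_id (A : ConfObj E) : homC₂ (𝟙 A) = 𝟙 A.X₂ := rfl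
@[simp] lemma homC₃_id (A : ConfObj E) : homC₃ (𝟙 A) = 𝟙 A.X₃ := rfl
@[simp] lemma homC₁_comp {A B D : ConfObj E} (f : A ⟶ B) (g : B ⟶ D) :
    homC₁ (f ≫ g) = homC₁ f ≫ homC₁ g := rfl
@[simp] lemma homC₂_comp {A B D : ConfObj E} (f : A ⟶ B) (g : B ⟶ D) :
    homC₂ (f ≫ g) = homC₂ f ≫ homC₂ g := rfl
@[simp] lemma homC₃_comp {A B D : ConfObj E} (f : A ⟶ B) (g : B ⟶ D) :
    homC₃ (f ≫ g) = homC₃ f ≫ homC₃ g := rfl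

instance confCategory : Category.{v} (ConfObj E) where
  id_comp f := confHom_ext (by simp) (by simp) (by simp)
  comp_id f := confHom_ext (by simp) (by simp) (by simp)
  assoc f g h := confHom_ext (by simp) (by simp) (by simp)

instance confHomAddCommGroup (A B : ConfObj E) : AddCommGroup (A ⟶ B) :=
  inferInstanceAs (AddCommGroup ↥(confHomGroup A B))

@[simp] lemma homC₁_add {A B : ConfObj E} (f g : A ⟶ B) :
    homC₁ (f + g) = homC₁ f + homC₁ g := rfl
@[simp] lemma homC₂_add {A B : ConfObj E} (f g : A ⟶ B) :
    homC₂ (f + g) = homC₂ f + homC₂ g := rfl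
@[simp] lemma homC₃_add {A B : ConfObj E} (f g : A ⟶ B) :
    homC₃ (f + g) = homC₃ f + homC₃ g := rfl

instance confPreadditive : Preadditive (ConfObj E) where
  homGroup A B := inferInstance
  add_comp A B D f f' g :=
    confHom_ext (by simp [Preadditive.add_comp]) (by simp [Preadditive.add_comp])
      (by simp [Preadditive.add_comp])
  comp_add A B D f g g' :=
    confHom_ext (by simp [Preadditive.comp_add]) (by simp [Preadditive.comp_add])
      (by simp [Preadditive.comp_add])

/-- The degree-wise class of conflations on `E(M)`: a short sequence of conflations is a
conflation if it is a conflation of `M` in each degree. -/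
def degConf (E : ExactStructure M) : ConfClass (ConfObj E) := fun _ _ _ f g =>
  E.conf (homC₁ f) (homC₁ g) ∧ E.conf (homC₂ f) (homC₂ g) ∧ E.conf (homC₃ f) (homC₃ g)

/-- The class `E₀`: degree-wise conflations splitting in degree `0`. -/
def degConf₀ (E : ExactStructure M) : ConfClass (ConfObj E) := fun _ _ _ f g =>
  degConf E f g ∧ Splits (homC₂ f) (homC₂ g)

/-- The class `E₀⁻¹`: degree-wise conflations splitting in degrees `-1` and `0`. -/
def degConf₀neg (E : ExactStructure M) : ConfClass (ConfObj E) := fun _ _ _ f g =>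
  degConf E f g ∧ Splits (homC₁ f) (homC₁ g) ∧ Splits (homC₂ f) (homC₂ g)

/-- The class `E₀¹`: degree-wise conflations splitting in degrees `0` and `1`. -/
def degConf₀pos (E : ExactStructure M) : ConfClass (ConfObj E) := fun _ _ _ f g =>
  degConf E f g ∧ Splits (homC₂ f) (homC₂ g) ∧ Splits (homC₃ f) (homC₃ g)

/-- The full subcategory `S(M)` of `E(M)` consisting of the split conflations. -/
def splitObjs (E : ExactStructure M) : Set (ConfObj E) :=
  {A | Splits A.i A.d}

end ConflationCategory

/-!
Write `[𝒫]` for the ideal of morphisms factoring through `𝒫`. Factorizations through `f̄` exist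
by the `Hom(𝒫,-)`-surjectivity of `g`, applied to the morphisms through which `t ≫ g` factors.
Uniqueness means that `s ≫ f ∈ [𝒫]` forces `s ∈ [𝒫]`. Let `0 → R₁ →r R₀ →γ Z → 0` be the
conflation given by (▼) and lift `γ = v ≫ g`. Since `γ` is a `𝒫`-precover, every morphism in
`[𝒫](T, Y)` has the form `e ≫ f + c ≫ v` with `e ∈ [𝒫]`. If such a morphism equals `s ≫ f`, then
`c ≫ γ = 0`, so `c` factors through `r`, and `r ≫ v` factors through `f`; cancelling the
monomorphism `f` writes `s` as `e` plus a morphism through `R₁`.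
-/

section FactorIdeal

variable {C : Type u} [Category.{v} C] [Preadditive C] (P : Set C)

lemma comp_mem_factorIdeal {T Q Y : C} (hQ : Q ∈ P) (a : T ⟶ Q) (b : Q ⟶ Y) :
    a ≫ b ∈ factorIdeal P T Y :=
  AddSubgroup.subset_closure ⟨Q, hQ, a, b, rfl⟩

lemma qmap_comp {X Y Z : C} (a : X ⟶ Y) (b : Y ⟶ Z) :
    qmap P a ≫ qmap P b = qmap P (a ≫ b) := rfl

lemma qmap_eq_qmap_iff {X Y : C} (a b : X ⟶ Y) :
    qmap P a = qmap P b ↔ a - b ∈ factorIdeal P X Y :=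
  QuotientAddGroup.eq_iff_sub_mem

lemma qmap_eq_zero_iff {X Y : C} (a : X ⟶ Y) :
    qmap P a = 0 ↔ a ∈ factorIdeal P X Y :=
  QuotientAddGroup.eq_zero_iff a

lemma isKernelOf_qmap {X Y Z : C} {f : X ⟶ Y} {g : Y ⟶ Z} (hfg : f ≫ g = 0)
    (hlift : ∀ {T : C} (t : T ⟶ Y), t ≫ g ∈ factorIdeal P T Z →
      ∃ s : T ⟶ X, t - s ≫ f ∈ factorIdeal P T Y)
    (hcancel : ∀ {T : C} (s : T ⟶ X), s ≫ f ∈ factorIdeal P T Y → s ∈ factorIdeal P T X) :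
    IsKernelOf (qmap P f) (qmap P g) := by
  refine ⟨by rw [qmap_comp, hfg]; rfl, fun {T} t' ht' => ?_⟩
  obtain ⟨t, rfl⟩ := QuotientAddGroup.mk_surjective t'
  obtain ⟨s, hs⟩ := hlift t ((qmap_eq_zero_iff P (t ≫ g)).mp ht')
  refine ⟨qmap P s, (qmap_eq_qmap_iff P _ _).mpr ?_, fun s' hs' => ?_⟩
  · rw [← neg_sub]
    exact neg_mem hs
  · obtain ⟨s', rfl⟩ := QuotientAddGroup.mk_surjective s'
    have hdiff : (s' - s) ≫ f ∈ factorIdeal P T.obj Y := by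
      have hsum := add_mem ((qmap_eq_qmap_iff P (s' ≫ f) t).mp hs') hs
      rwa [sub_add_sub_cancel, ← Preadditive.sub_comp] at hsum
    exact (qmap_eq_qmap_iff P s' s).mpr (hcancel _ hdiff)

end FactorIdeal

section HomCovExact

variable {C : Type u} [Category.{v} C] [Preadditive C] {P : Set C}

lemma IsKernelOf.mono {K X Y : C} {k : K ⟶ X} {f : X ⟶ Y} (hk : IsKernelOf k f) : Mono k := by
  refine ⟨fun {T} u₁ u₂ h => ?_⟩
  obtain ⟨_, -, huniq⟩ := hk.2 (u₂ ≫ k) (by rw [Category.assoc, hk.1, comp_zero])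
  exact (huniq u₁ h).trans (huniq u₂ rfl).symm

variable {X Y Z : C} {f : X ⟶ Y} {g : Y ⟶ Z}

lemma factorIdeal_le_map_rightComp (hexact : HomCovExact P f g) (T : C) :
    factorIdeal P T Z ≤ (factorIdeal P T Y).map (Preadditive.rightComp T g) := by
  refine (AddSubgroup.closure_le _).mpr ?_
  rintro _ ⟨Q, hQ, a, b, rfl⟩
  obtain ⟨u, rfl⟩ := (hexact Q hQ).2.2 b
  exact ⟨a ≫ u, comp_mem_factorIdeal P hQ a u, Category.assoc _ _ _⟩

lemma exists_sub_comp_mem_factorIdeal (hker : IsKernelOf f g) (hexact : HomCovExact P f g)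
    {T : C} {t : T ⟶ Y} (ht : t ≫ g ∈ factorIdeal P T Z) :
    ∃ s : T ⟶ X, t - s ≫ f ∈ factorIdeal P T Y := by
  obtain ⟨y, hy, hyg⟩ := factorIdeal_le_map_rightComp hexact T ht
  obtain ⟨s, hs, -⟩ := hker.2 (t - y) (by
    rw [Preadditive.sub_comp, ← hyg]
    exact sub_self _)
  exact ⟨s, by rwa [hs, sub_sub_cancel]⟩

lemma factorIdeal_le_map_sup_range (hker : IsKernelOf f g) {R₀ : C} {γ : R₀ ⟶ Z}
    (hγ : IsPrecover P γ) {v : R₀ ⟶ Y} (hv : v ≫ g = γ) (T : C) :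
    factorIdeal P T Y ≤ (factorIdeal P T X).map (Preadditive.rightComp T f) ⊔
      (Preadditive.rightComp T v).range := by
  refine (AddSubgroup.closure_le _).mpr ?_
  rintro _ ⟨Q, hQ, a, b, rfl⟩
  obtain ⟨c, hc⟩ := hγ.2 Q hQ (b ≫ g)
  obtain ⟨e, he, -⟩ := hker.2 (b - c ≫ v) (by
    rw [Preadditive.sub_comp, Category.assoc, hv, hc, sub_self])
  have hb : a ≫ b = (a ≫ e) ≫ f + (a ≫ c) ≫ v := by
    simp only [Category.assoc, he, Preadditive.comp_sub, sub_add_cancel]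
  rw [SetLike.mem_coe, hb]
  exact add_mem
    (AddSubgroup.mem_sup_left ⟨a ≫ e, comp_mem_factorIdeal P hQ a e, rfl⟩)
    (AddSubgroup.mem_sup_right ⟨a ≫ c, rfl⟩)

lemma mem_factorIdeal_of_comp_mem (hker : IsKernelOf f g) (hexact : HomCovExact P f g)
    {R₀ R₁ : C} {r : R₁ ⟶ R₀} {γ : R₀ ⟶ Z} (hrγ : IsKernelOf r γ) (hR₁ : R₁ ∈ P)
    (hγ : IsPrecover P γ) {T : C} {s : T ⟶ X} (hs : s ≫ f ∈ factorIdeal P T Y) :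
    s ∈ factorIdeal P T X := by
  obtain ⟨v, hv⟩ := (hexact R₀ hγ.1).2.2 γ
  obtain ⟨w, hw, -⟩ := hker.2 (r ≫ v) (by rw [Category.assoc, hv, hrγ.1])
  obtain ⟨_, ⟨e, he, rfl⟩, _, ⟨c, rfl⟩, hsum⟩ :=
    AddSubgroup.mem_sup.mp (factorIdeal_le_map_sup_range hker hγ hv T hs)
  change e ≫ f + c ≫ v = s ≫ f at hsum
  have hcv : c ≫ v = (s - e) ≫ f := by rw [Preadditive.sub_comp, ← hsum, add_sub_cancel_left]
  obtain ⟨d, hd, -⟩ := hrγ.2 c (by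
    rw [← hv, ← Category.assoc, hcv, Category.assoc, hker.1, comp_zero])
  have hs_eq : s = e + d ≫ w := by
    have : Mono f := hker.mono
    rw [← cancel_mono f, Preadditive.add_comp, Category.assoc, hw, ← Category.assoc, hd, hsum]
  rw [hs_eq]
  exact add_mem he (comp_mem_factorIdeal P hR₁ d w)

end HomCovExact

theorem quotient_kernel_of_homCovExact_general {M : Type u} [Category.{v} M] [Preadditive M]
    (E : ExactStructure M) (P : Set M)
    (h : CondCov E.conf P) {X Y Z : M} (f : X ⟶ Y) (g : Y ⟶ Z)
    (hconf : E.conf f g) (hexact : HomCovExact P f g) :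
    IsKernelOf (qmap P f) (qmap P g) := by
  have hker := E.ker_of_conf hconf
  obtain ⟨R₀, R₁, r, γ, hrγ, -, hR₁, hγ⟩ := h.2 Z
  exact isKernelOf_qmap P hker.1 (fun t ht => exists_sub_comp_mem_factorIdeal hker hexact ht)
    (fun s hs => mem_factorIdeal_of_comp_mem hker hexact (E.ker_of_conf hrγ) hR₁ hγ hs)

/-- if `𝒫` satisfies condition (▼), then for every `Hom(𝒫,-)`-exact
conflation `0 → X → Y → Z → 0`, `f̄` is the kernel of `ḡ` in `M/𝒫`. -/
theorem quotient_kernel_of_homCovExact {M : Type u} [Category.{v} M] [Preadditive M]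
    [HasBinaryBiproducts M] (E : ExactStructure M) (P : Set M) (hP : IsAddSubcat P)
    (h : CondCov E.conf P) {X Y Z : M} (f : X ⟶ Y) (g : Y ⟶ Z)
    (hconf : E.conf f g) (hexact : HomCovExact P f g) :
    IsKernelOf (qmap P f) (qmap P g) :=
  quotient_kernel_of_homCovExact_general E P h f g hconf hexact

end PaperQEC
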